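/- arXiv:2401.09893 — 4 statements merged into one kernel-verified Lean document; each statement's English description precedes it below -/
import Mathlib

section
/- The unit ball of the hexagonal norm D is the convex hull of the six points (1,0), (1/2, √3/2), (−1/2, √3/2), (−1,0), (−1/2, −√3/2), (1/2, −√3/2), i.e., a regular hexagon. -/
/-!
The ball `{D ≤ 1}` is a sublevel set of the convex function `D` and contains the six vertices,
so it contains their convex hull. Conversely, both sets are centrally symmetric, so it suffices
to take a point `(x, y)` of the ball with `y ≥ 0`. Then `|x| ≤ 1 - y/√3`, and the endpoints
`(±(1 - y/√3), y)` of that horizontal chord lie on the hexagon's edges from `(±1, 0)` to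
`(±1/2, √3/2)`, at parameter `t = 2y/√3 ∈ [0, 1]`.
-/

noncomputable def D (p : ℝ × ℝ) : ℝ :=
  max (|p.1| + |p.2| / Real.sqrt 3) (2 * |p.2| / Real.sqrt 3)

open Set

theorem Convex.mk_mem_of_mem_Icc {F : Type*} [AddCommGroup F] [Module ℝ F] {C : Set (ℝ × F)}
    (hC : Convex ℝ C) {a b x : ℝ} {y : F} (ha : (a, y) ∈ C) (hb : (b, y) ∈ C)
    (hx : x ∈ Icc a b) : (x, y) ∈ C := by
  rw [← segment_eq_Icc (hx.1.trans hx.2)] at hx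
  exact hC.segment_subset ha hb
    (Prod.image_mk_segment_left (𝕜 := ℝ) a b y ▸ mem_image_of_mem _ hx)

theorem convexOn_univ_abs_linearMap {E : Type*} [AddCommGroup E] [Module ℝ E]
    (f : E →ₗ[ℝ] ℝ) : ConvexOn ℝ univ fun p => |f p| :=
  (convexOn_univ_norm.comp_linearMap f).congr fun p _ => Real.norm_eq_abs (f p)

theorem convexOn_D : ConvexOn ℝ univ D := by
  have hfst := convexOn_univ_abs_linearMap (LinearMap.fst ℝ ℝ ℝ)
  have hsnd := convexOn_univ_abs_linearMap (LinearMap.snd ℝ ℝ ℝ)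
  refine ((hfst.add (hsnd.smul (c := (√3)⁻¹) (by positivity))).sup
    (hsnd.smul (c := 2 / √3) (by positivity))).congr fun p _ => ?_
  simp only [D, Pi.sup_apply, Pi.add_apply, smul_eq_mul, LinearMap.fst_apply, LinearMap.snd_apply]
  ring_nf

theorem convex_setOf_D_le_one : Convex ℝ {p | D p ≤ 1} := by
  simpa using convexOn_D.convex_le 1

theorem D_neg (p : ℝ × ℝ) : D (-p) = D p := by
  simp [D]

def hexagonVertices : Set (ℝ × ℝ) :=
  {((1 : ℝ), (0 : ℝ)), (1/2, √3 / 2), (-(1/2), √3 / 2),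
    (-1, 0), (-(1/2), -(√3 / 2)), (1/2, -(√3 / 2))}

theorem neg_hexagonVertices : -hexagonVertices = hexagonVertices := by
  ext p
  simp only [hexagonVertices, mem_neg, mem_insert_iff, mem_singleton_iff, neg_eq_iff_eq_neg,
    Prod.neg_mk, neg_neg, neg_zero]
  tauto

theorem hexagonVertices_subset_setOf_D_le_one : hexagonVertices ⊆ {p | D p ≤ 1} := by
  have hs : 0 < √3 := by positivity
  simp only [hexagonVertices, insert_subset_iff, singleton_subset_iff, mem_ofPred_eq, D, abs_neg,
    abs_of_pos (half_pos hs)]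
  field_simp
  norm_num

theorem mem_convexHull_hexagonVertices_of_snd_nonneg {p : ℝ × ℝ} (hp : D p ≤ 1)
    (hy : 0 ≤ p.2) : p ∈ convexHull ℝ hexagonVertices := by
  obtain ⟨x, y⟩ := p
  simp only [D, max_le_iff, abs_of_nonneg hy] at hp
  obtain ⟨hxy, hy1⟩ := hp
  have hC := convex_convexHull ℝ hexagonVertices
  have hv : ∀ v ∈ hexagonVertices, v ∈ convexHull ℝ hexagonVertices :=
    subset_convexHull ℝ _
  set t := 2 * y / √3
  have ht : 0 ≤ t := by positivity
  have hright : (1 - y / √3, y) =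
      (1 - t) • ((1 : ℝ), (0 : ℝ)) + t • ((1/2 : ℝ), √3 / 2) := by
    ext <;> simp only [t, Prod.smul_mk, Prod.mk_add_mk, smul_eq_mul] <;> field_simp <;> ring
  have hleft : (-(1 - y / √3), y) =
      (1 - t) • ((-1 : ℝ), (0 : ℝ)) + t • (-(1/2 : ℝ), √3 / 2) := by
    ext <;> simp only [t, Prod.smul_mk, Prod.mk_add_mk, smul_eq_mul] <;> field_simp <;> ring
  refine hC.mk_mem_of_mem_Icc (a := -(1 - y / √3)) (b := 1 - y / √3) ?_ ?_
    (abs_le.1 (le_sub_iff_add_le.2 hxy))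
  · rw [hleft]
    exact hC (hv _ (by simp [hexagonVertices])) (hv _ (by simp [hexagonVertices]))
      (sub_nonneg.2 hy1) ht (sub_add_cancel 1 t)
  · rw [hright]
    exact hC (hv _ (by simp [hexagonVertices])) (hv _ (by simp [hexagonVertices]))
      (sub_nonneg.2 hy1) ht (sub_add_cancel 1 t)

theorem unit_ball_is_regular_hexagon :
    {p : ℝ × ℝ | D p ≤ 1} =
      convexHull ℝ
        ({((1 : ℝ), (0 : ℝ)), (1/2, Real.sqrt 3 / 2), (-(1/2), Real.sqrt 3 / 2),
          (-1, 0), (-(1/2), -(Real.sqrt 3 / 2)), (1/2, -(Real.sqrt 3 / 2))} :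
          Set (ℝ × ℝ)) := by
  refine Subset.antisymm (fun p hp => ?_)
    (convexHull_min hexagonVertices_subset_setOf_D_le_one convex_setOf_D_le_one)
  rcases le_total 0 p.2 with hy | hy
  · exact mem_convexHull_hexagonVertices_of_snd_nonneg hp hy
  · have hneg := mem_convexHull_hexagonVertices_of_snd_nonneg (p := -p)
      (by rwa [D_neg]) (by simpa using hy)
    rwa [← neg_hexagonVertices, convexHull_neg, mem_neg, neg_neg] at hneg
end

section
/- For all L in the domain L ≥ √(2V)·3^{1/4} (where both are defined), P₂(L) := 3L + 3√((2L² − 4√3 V)/3) satisfies P₂(L) > P₁(L) := 7√((3L² + 4√3 V)/21) − L. -/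
/-!
The domain condition `√(2V)·3^(1/4) ≤ L` says exactly that `L² ≥ 2√3 V`. Under it the square root
in `P₁` is below `4L/7`, because `(3L² + 4√3 V)/21 < 16L²/49` reduces to `196√3 V < 189 L²`.
Hence `P₁ < 7 · 4L/7 - L = 3L ≤ P₂`.
-/

open Real

lemma Real.rpow_one_div_four_sq {x : ℝ} (hx : 0 ≤ x) : (x ^ (1 / 4 : ℝ)) ^ 2 = √x := by
  rw [← rpow_natCast, ← rpow_mul hx, sqrt_eq_rpow]
  norm_num

lemma two_mul_mul_sqrt_three_le_sq {V L : ℝ} (hV : 0 ≤ V) (hL : √(2 * V) * 3 ^ (1 / 4 : ℝ) ≤ L) :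
    2 * V * √3 ≤ L ^ 2 :=
  calc 2 * V * √3 = (√(2 * V) * 3 ^ (1 / 4 : ℝ)) ^ 2 := by
        rw [mul_pow, sq_sqrt (by positivity), rpow_one_div_four_sq (by norm_num)]
    _ ≤ L ^ 2 := pow_le_pow_left₀ (by positivity) hL 2

lemma sqrt_lt_four_mul_div_seven {a L : ℝ} (hL : 0 < L) (h : 2 * a ≤ L ^ 2) :
    √((3 * L ^ 2 + 4 * a) / 21) < 4 * L / 7 := by
  rw [sqrt_lt' (by positivity)]
  nlinarith

/-- For all `L ≥ √(2V)·3^(1/4)`, `P₂(L) = 3L + 3√((2L² - 4√3 V)/3)` exceeds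
`P₁(L) = 7√((3L² + 4√3 V)/21) - L`. -/
theorem P2_gt_P1 (V : ℝ) (hV : 0 < V) :
    ∀ L : ℝ, Real.sqrt (2 * V) * (3 : ℝ) ^ ((1 : ℝ) / 4) ≤ L →
      7 * Real.sqrt ((3 * L ^ 2 + 4 * Real.sqrt 3 * V) / 21) - L <
        3 * L + 3 * Real.sqrt ((2 * L ^ 2 - 4 * Real.sqrt 3 * V) / 3) := by
  intro L hL
  have hL_pos : 0 < L := lt_of_lt_of_le (by positivity) hL
  have h_sq : 2 * (√3 * V) ≤ L ^ 2 := by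
    linarith [two_mul_mul_sqrt_three_le_sq hV.le hL]
  have h_root := sqrt_lt_four_mul_div_seven hL_pos h_sq
  rw [← mul_assoc] at h_root
  linarith [sqrt_nonneg ((2 * L ^ 2 - 4 * √3 * V) / 3)]
end

section
/- For fixed α ∈ (0,1] and L ≥ √2·3^{1/4}·√α, the kissing-hexagon perimeter P₄(L) = 7√((3L² + 4√3)/21) − √((2L² − 4√3α)/3) + L satisfies P₄(L) ≥ P₃(L) = 7√((3L² + 4√3)/21) + 7√((3L² + 4√3α)/21) − 3L. -/
/-- For `α ∈ (0,1]` and `L ≥ √2·3^(1/4)·√α`, the kissing-hexagon perimeter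
`P₄(L)` is at least `P₃(L)`. -/
theorem P4_ge_P3 (α : ℝ) (hα0 : 0 < α) (hα1 : α ≤ 1) :
    ∀ L : ℝ, Real.sqrt 2 * (3 : ℝ) ^ ((1 : ℝ) / 4) * Real.sqrt α ≤ L →
      7 * Real.sqrt ((3 * L ^ 2 + 4 * Real.sqrt 3) / 21) +
          7 * Real.sqrt ((3 * L ^ 2 + 4 * Real.sqrt 3 * α) / 21) - 3 * L ≤
        7 * Real.sqrt ((3 * L ^ 2 + 4 * Real.sqrt 3) / 21) -
          Real.sqrt ((2 * L ^ 2 - 4 * Real.sqrt 3 * α) / 3) + L := by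
  intro L hL
  have h3 : (0:ℝ) ≤ 3 := by norm_num
  have hs3 : 0 ≤ Real.sqrt 3 := Real.sqrt_nonneg 3
  have hs3' : Real.sqrt 3 * Real.sqrt 3 = 3 := Real.mul_self_sqrt h3
  -- the lower bound on L is nonnegative
  have hq : 0 ≤ Real.sqrt 2 * (3 : ℝ) ^ ((1 : ℝ) / 4) * Real.sqrt α := by
    positivity
  have hL0 : 0 ≤ L := le_trans hq hL
  -- square of the lower bound
  have hsq : (Real.sqrt 2 * (3 : ℝ) ^ ((1 : ℝ) / 4) * Real.sqrt α) ^ 2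
      = 2 * Real.sqrt 3 * α := by
    have h1 : ((3 : ℝ) ^ ((1 : ℝ) / 4)) ^ 2 = Real.sqrt 3 := by
      rw [← Real.rpow_natCast ((3:ℝ) ^ ((1:ℝ)/4)) 2, ← Real.rpow_mul h3]
      norm_num
      rw [Real.sqrt_eq_rpow]
    have h2 : (Real.sqrt 2) ^ 2 = 2 := Real.sq_sqrt (by norm_num)
    have h4 : (Real.sqrt α) ^ 2 = α := Real.sq_sqrt hα0.le
    rw [mul_pow, mul_pow, h1, h2, h4]
  have hL2 : 2 * Real.sqrt 3 * α ≤ L ^ 2 := by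
    rw [← hsq]
    exact pow_le_pow_left₀ hq hL 2
  -- abbreviations
  set A := (3 * L ^ 2 + 4 * Real.sqrt 3 * α) / 21 with hA
  set B := (2 * L ^ 2 - 4 * Real.sqrt 3 * α) / 3 with hB
  have hA0 : 0 ≤ A := by
    have : 0 ≤ Real.sqrt 3 * α := mul_nonneg hs3 hα0.le
    have := sq_nonneg L
    rw [hA]; positivity
  have hB0 : 0 ≤ B := by rw [hB]; linarith
  have ha := Real.sqrt_nonneg A
  have hb := Real.sqrt_nonneg B
  have ha2 : Real.sqrt A ^ 2 = A := Real.sq_sqrt hA0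
  have hb2 : Real.sqrt B ^ 2 = B := Real.sq_sqrt hB0
  -- the main estimate: 7√A + √B ≤ 4L
  have key : 7 * Real.sqrt A + Real.sqrt B ≤ 4 * L := by
    have hsq2 : (7 * Real.sqrt A + Real.sqrt B) ^ 2 ≤ (4 * L) ^ 2 := by
      have hab : 2 * (Real.sqrt A * Real.sqrt B) ≤ Real.sqrt A ^ 2 + Real.sqrt B ^ 2 := by
        nlinarith [sq_nonneg (Real.sqrt A - Real.sqrt B)]
      nlinarith [ha2, hb2, hab, sq_nonneg L]
    calc 7 * Real.sqrt A + Real.sqrt B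
        = Real.sqrt ((7 * Real.sqrt A + Real.sqrt B) ^ 2) := by
          rw [Real.sqrt_sq (by positivity)]
      _ ≤ Real.sqrt ((4 * L) ^ 2) := Real.sqrt_le_sqrt hsq2
      _ = 4 * L := Real.sqrt_sq (by linarith)
  linarith
end

section
/- For fixed α ∈ (0,1] and L ≥ √2·3^{1/4}, the perimeter P₆(L) = 5L − √((2L² − 4√3)/3) − √((2L² − 4√3α)/3) satisfies P₆(L) ≥ P₃(L) = 7√((3L² + 4√3)/21) + 7√((3L² + 4√3α)/21) − 3L. -/
/-!
`P₆ - P₃` splits into two terms of the form `4L - 7a - b` with `a = √((3L² + c)/21)` and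
`b = √((2L² - c)/3)`, for `c = 4√3` and `c = 4√3α`. Since `21a² + 3b² = 5L²` does not depend
on `c`, weighted Cauchy–Schwarz gives `(7a + b)² ≤ (8/3)(21a² + 3b²) = 40L²/3 ≤ (4L)²`.
The hypothesis `L ≥ √2·3^{1/4}`, i.e. `L² ≥ 2√3`, keeps the radicands nonnegative.
-/

open Real

lemma sq_seven_mul_add_le (a b : ℝ) : (7 * a + b) ^ 2 ≤ 8 / 3 * (21 * a ^ 2 + 3 * b ^ 2) := by
  nlinarith [sq_nonneg (a - b)]

lemma seven_mul_sqrt_add_sqrt_le {L c : ℝ} (hL : 0 ≤ L) (hc₀ : -(3 * L ^ 2) ≤ c)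
    (hc₁ : c ≤ 2 * L ^ 2) :
    7 * √((3 * L ^ 2 + c) / 21) + √((2 * L ^ 2 - c) / 3) ≤ 4 * L := by
  set a := √((3 * L ^ 2 + c) / 21)
  set b := √((2 * L ^ 2 - c) / 3)
  have ha : a ^ 2 = (3 * L ^ 2 + c) / 21 := sq_sqrt (by linarith)
  have hb : b ^ 2 = (2 * L ^ 2 - c) / 3 := sq_sqrt (by linarith)
  have hsq : (7 * a + b) ^ 2 ≤ (4 * L) ^ 2 := by
    calc (7 * a + b) ^ 2 ≤ 8 / 3 * (21 * a ^ 2 + 3 * b ^ 2) := sq_seven_mul_add_le a b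
      _ = 40 / 3 * L ^ 2 := by rw [ha, hb]; ring
      _ ≤ (4 * L) ^ 2 := by nlinarith [sq_nonneg L]
  exact le_of_sq_le_sq hsq (by positivity)

lemma sq_sqrt_mul_rpow_quarter {x y : ℝ} (hx : 0 ≤ x) (hy : 0 ≤ y) :
    (√x * y ^ ((1 : ℝ) / 4)) ^ 2 = x * √y := by
  rw [mul_pow, sq_sqrt hx, ← rpow_natCast, ← rpow_mul hy, sqrt_eq_rpow]
  norm_num

/-- For `α ∈ (0,1]` and `L ≥ √2·3^(1/4)`, the kissing-hexagon perimeter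
`P₆(L)` is at least `P₃(L)`. -/
theorem P6_ge_P3 (α : ℝ) (hα0 : 0 < α) (hα1 : α ≤ 1) :
    ∀ L : ℝ, Real.sqrt 2 * (3 : ℝ) ^ ((1 : ℝ) / 4) ≤ L →
      7 * Real.sqrt ((3 * L ^ 2 + 4 * Real.sqrt 3) / 21) +
          7 * Real.sqrt ((3 * L ^ 2 + 4 * Real.sqrt 3 * α) / 21) - 3 * L ≤
        5 * L - Real.sqrt ((2 * L ^ 2 - 4 * Real.sqrt 3) / 3) -
          Real.sqrt ((2 * L ^ 2 - 4 * Real.sqrt 3 * α) / 3) := by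
  intro L hL
  have hL₀ : 0 ≤ L := le_trans (by positivity) hL
  have hL₂ : 2 * √3 ≤ L ^ 2 := by
    rw [← sq_sqrt_mul_rpow_quarter (by norm_num) (by norm_num)]
    exact pow_le_pow_left₀ (by positivity) hL 2
  have h₃ : 0 ≤ √3 := sqrt_nonneg 3
  have hα : 4 * √3 * α ≤ 4 * √3 := by nlinarith
  have k₁ := seven_mul_sqrt_add_sqrt_le (c := 4 * √3) hL₀ (by linarith) (by linarith)
  have k₂ := seven_mul_sqrt_add_sqrt_le (c := 4 * √3 * α) hL₀ (by nlinarith) (by linarith)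
  linarith
end
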